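/- arXiv:1509.06276 — 2 statements merged into one kernel-verified Lean document; each statement's English description precedes it below -/
import Mathlib

section
/- Let Φ = {φ_1,…,φ_n} be a path-on-lattice IFS with respect to a path from 0 to d, and consider its associated two-state ordered GIFS with invariant sets (E_1, E_{−1}). Then the head of E_1 is 0 and the tail of E_1 is d, while the head of E_{−1} is d and the tail of E_{−1} is 0. -/
open MeasureTheory Set

noncomputable section

/-- A graph-directed iterated function system (GIFS) with vertex set `Fin N`,
a finite edge set, and a contracting similitude of ratio `r e ∈ (0,1)` for each edge. -/
structure GIFS (X : Type) [MetricSpace X] (N : ℕ) where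
  Edge : Type
  fintypeEdge : Fintype Edge
  src : Edge → Fin N
  tgt : Edge → Fin N
  r : Edge → ℝ
  r_pos : ∀ e, 0 < r e
  r_lt_one : ∀ e, r e < 1
  g : Edge → X → X
  g_sim : ∀ e x y, dist (g e x) (g e y) = r e * dist x y

attribute [instance] GIFS.fintypeEdge

/-- The finite prefix of length `n` of an infinite word. -/
def prefixList {α : Type} (ω : ℕ → α) (n : ℕ) : List α := List.ofFn fun k : Fin n => ω k

/-- Spectral radius of a real square matrix: supremum of the moduli of its
complex eigenvalues. -/
def specRad {n : ℕ} (A : Matrix (Fin n) (Fin n) ℝ) : ℝ :=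
  sSup ((fun z => ‖z‖) '' spectrum ℂ (A.map Complex.ofReal))

namespace GIFS

variable {X : Type} [MetricSpace X] {N : ℕ}

/-- `γ` is a finite path (possibly empty) starting from the vertex `i`. -/
def IsPathFrom (G : GIFS X N) (i : Fin N) (γ : List G.Edge) : Prop :=
  γ.Chain' (fun a b => G.tgt a = G.src b) ∧ ∀ e ∈ γ.head?, G.src e = i

/-- The terminal vertex of a finite path starting at `i`. -/
def pathTgt (G : GIFS X N) (i : Fin N) (γ : List G.Edge) : Fin N :=
  (γ.getLast?).elim i G.tgt

/-- The composition `g_{γ₁} ∘ ⋯ ∘ g_{γ_n}` along a finite path. -/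
def pathMap (G : GIFS X N) (γ : List G.Edge) : X → X :=
  γ.foldr (fun e f => G.g e ∘ f) id

/-- The cylinder set `E_γ = g_{γ₁} ∘ ⋯ ∘ g_{γ_n} (E_{t(γ)})` of a finite path from `i`. -/
def pathSet (G : GIFS X N) (E : Fin N → Set X) (i : Fin N) (γ : List G.Edge) : Set X :=
  G.pathMap γ '' E (G.pathTgt i γ)

/-- `E` is the family of invariant sets of the GIFS: nonempty compact sets
satisfying the set equations. -/
def IsInvariant (G : GIFS X N) (E : Fin N → Set X) : Prop :=
  (∀ i, (E i).Nonempty) ∧ (∀ i, IsCompact (E i)) ∧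
    ∀ i, E i = ⋃ e ∈ {e : G.Edge | G.src e = i}, G.g e '' E (G.tgt e)

/-- The open set condition witnessed by a given family of open sets. -/
def OSCWith (G : GIFS X N) (U : Fin N → Set X) : Prop :=
  (∀ i, (U i).Nonempty ∧ IsOpen (U i)) ∧
  (∀ e : G.Edge, G.g e '' U (G.tgt e) ⊆ U (G.src e)) ∧
  ∀ e f : G.Edge, e ≠ f → G.src e = G.src f →
    Disjoint (G.g e '' U (G.tgt e)) (G.g f '' U (G.tgt f))

/-- The open set condition. -/
def OSC (G : GIFS X N) : Prop := ∃ U, G.OSCWith U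

/-- The base graph is strongly connected. -/
def StronglyConnected (G : GIFS X N) : Prop :=
  ∀ i j : Fin N, ∃ γ : List G.Edge, γ ≠ [] ∧ G.IsPathFrom i γ ∧ G.pathTgt i γ = j

/-- The matrix `M(t)` with entries `M(t)_{ij} = ∑_{e ∈ Γ_{ij}} r_e ^ t`. -/
def M (G : GIFS X N) (t : ℝ) : Matrix (Fin N) (Fin N) ℝ :=
  Matrix.of fun i j => ∑ e : G.Edge, if G.src e = i ∧ G.tgt e = j then G.r e ^ t else 0

/-- `δ` is the similarity dimension: the (unique) positive real with `ρ(M(δ)) = 1`. -/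
def IsSimDim (G : GIFS X N) (δ : ℝ) : Prop := 0 < δ ∧ specRad (G.M δ) = 1

/-- The space of infinite paths emanating from the vertex `i`. -/
def InfPath (G : GIFS X N) (i : Fin N) : Type :=
  {ω : ℕ → G.Edge // G.src (ω 0) = i ∧ ∀ n, G.tgt (ω n) = G.src (ω (n + 1))}

instance (G : GIFS X N) : MeasurableSpace G.Edge := ⊤

instance (G : GIFS X N) (i : Fin N) : MeasurableSpace (G.InfPath i) :=
  MeasurableSpace.comap Subtype.val MeasurableSpace.pi

/-- `π` is the symbolic projection `Γ_i^∞ → E_i` : the image of an infinite path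
belongs to every cylinder set of its finite prefixes. -/
def IsCoding (G : GIFS X N) (E : Fin N → Set X) (i : Fin N) (π : G.InfPath i → X) : Prop :=
  ∀ (ω : G.InfPath i) (n : ℕ), π ω ∈ G.pathSet E i (prefixList ω.1 n)

end GIFS

/-- An ordered GIFS: a GIFS with a partial order on the edges which restricts to
a linear order on each `Γ_i` (edges emanating from `i`), edges emanating from
distinct vertices being incomparable. -/
structure OGIFS (X : Type) [MetricSpace X] (N : ℕ) extends GIFS X N where
  elt : Edge → Edge → Prop
  elt_src : ∀ {a b}, elt a b → src a = src b
  elt_irrefl : ∀ a, ¬ elt a a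
  elt_trans : ∀ {a b c}, elt a b → elt b c → elt a c
  elt_total : ∀ a b, src a = src b → elt a b ∨ a = b ∨ elt b a

namespace OGIFS

variable {X : Type} [MetricSpace X] {N : ℕ}

/-- The induced dictionary order on finite paths. -/
def PathLt (G : OGIFS X N) (γ ω : List G.Edge) : Prop := List.Lex G.elt γ ω

/-- Two adjacent edges in some `Γ_i`: consecutive in the order `≺`. -/
def AdjacentEdges (G : OGIFS X N) (e f : G.Edge) : Prop :=
  G.elt e f ∧ ¬ ∃ e', G.elt e e' ∧ G.elt e' f

/-- Two same-length paths from `i`, adjacent (consecutive) in the dictionary order. -/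
def Adjacent (G : OGIFS X N) (i : Fin N) (γ ω : List G.Edge) : Prop :=
  G.toGIFS.IsPathFrom i γ ∧ G.toGIFS.IsPathFrom i ω ∧ γ.length = ω.length ∧
  G.PathLt γ ω ∧
  ¬ ∃ η : List G.Edge, G.toGIFS.IsPathFrom i η ∧ η.length = γ.length ∧
      G.PathLt γ η ∧ G.PathLt η ω

/-- A linear GIFS: every two adjacent cylinders of invariant sets intersect. -/
def IsLinear (G : OGIFS X N) (E : Fin N → Set X) : Prop :=
  ∀ (i : Fin N) (γ ω : List G.Edge), G.Adjacent i γ ω →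
    (G.toGIFS.pathSet E i γ ∩ G.toGIFS.pathSet E i ω).Nonempty

/-- An infinite path from `i` is lowest if all its finite prefixes are lowest in the
dictionary order among same-length paths from `i`. -/
def IsLowest (G : OGIFS X N) (i : Fin N) (ω : G.toGIFS.InfPath i) : Prop :=
  ∀ (n : ℕ) (γ : List G.Edge), G.toGIFS.IsPathFrom i γ → γ.length = n →
    γ = prefixList ω.1 n ∨ G.PathLt (prefixList ω.1 n) γ

/-- An infinite path from `i` is highest if all its finite prefixes are highest. -/
def IsHighest (G : OGIFS X N) (i : Fin N) (ω : G.toGIFS.InfPath i) : Prop :=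
  ∀ (n : ℕ) (γ : List G.Edge), G.toGIFS.IsPathFrom i γ → γ.length = n →
    γ = prefixList ω.1 n ∨ G.PathLt γ (prefixList ω.1 n)

/-- `a` is the head of `E_i`: the projection of the lowest infinite path from `i`. -/
def IsHead (G : OGIFS X N) (E : Fin N → Set X) (i : Fin N) (a : X) : Prop :=
  ∃ ω : G.toGIFS.InfPath i, G.IsLowest i ω ∧
    ∀ n : ℕ, a ∈ G.toGIFS.pathSet E i (prefixList ω.1 n)

/-- `a` is the tail of `E_i`: the projection of the highest infinite path from `i`. -/
def IsTail (G : OGIFS X N) (E : Fin N → Set X) (i : Fin N) (a : X) : Prop :=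
  ∃ ω : G.toGIFS.InfPath i, G.IsHighest i ω ∧
    ∀ n : ℕ, a ∈ G.toGIFS.pathSet E i (prefixList ω.1 n)

/-- The chain condition: for adjacent edges `e ≺ f` emanating from a common vertex,
`g_e(tail of E_{t(e)}) = g_f(head of E_{t(f)})`. -/
def ChainCondition (G : OGIFS X N) (E : Fin N → Set X) : Prop :=
  ∀ e f : G.Edge, G.AdjacentEdges e f →
    ∀ b a : X, G.IsTail E (G.tgt e) b → G.IsHead E (G.tgt f) a → G.g e b = G.g f a

open Classical in
/-- Translation part of the maps of the measure-recording GIFS: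
`b_e = ∑_{e' ≺ e} h_{t(e')} r_{e'}^δ`. -/
def bCoef (G : OGIFS X N) (δ : ℝ) (h : Fin N → ℝ) (e : G.Edge) : ℝ :=
  ∑ e' : G.Edge, if G.elt e' e then h (G.tgt e') * G.r e' ^ δ else 0

/-- The maps `f_e (x) = r_e^δ x + b_e` of the measure-recording GIFS. -/
def fmap (G : OGIFS X N) (δ : ℝ) (h : Fin N → ℝ) (e : G.Edge) : ℝ → ℝ :=
  fun x => G.r e ^ δ * x + G.bCoef δ h e

/-- Composition of the measure-recording maps along a finite path. -/
def fPathMap (G : OGIFS X N) (δ : ℝ) (h : Fin N → ℝ) (γ : List G.Edge) : ℝ → ℝ :=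
  γ.foldr (fun e f => G.fmap δ h e ∘ f) id

/-- Cylinder intervals `F_γ` of the measure-recording GIFS (with `F_i = [0, h_i]`). -/
def fPathSet (G : OGIFS X N) (δ : ℝ) (h : Fin N → ℝ) (i : Fin N) (γ : List G.Edge) : Set ℝ :=
  G.fPathMap δ h γ '' Icc 0 (h (G.toGIFS.pathTgt i γ))

/-- `ρ` is the symbolic projection `Γ_i^∞ → F_i` of the measure-recording GIFS. -/
def IsFCoding (G : OGIFS X N) (δ : ℝ) (h : Fin N → ℝ) (i : Fin N)
    (ρ : G.toGIFS.InfPath i → ℝ) : Prop :=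
  ∀ (ω : G.toGIFS.InfPath i) (n : ℕ), ρ ω ∈ G.fPathSet δ h i (prefixList ω.1 n)

end OGIFS

/-- An optimal parametrization of an `s`-set `K`: a surjection `[0,1] → K` which is
almost one-to-one, measure-preserving and `1/s`-Hölder continuous. -/
def OptimalParam {X : Type} [MetricSpace X] [MeasurableSpace X] [BorelSpace X]
    (s : ℝ) (K : Set X) (ψ : ℝ → X) : Prop :=
  ψ '' Icc (0:ℝ) 1 = K ∧
  (∃ K' ⊆ K, ∃ I' ⊆ Icc (0:ℝ) 1,
      μH[s] (K \ K') = 0 ∧ volume (Icc (0:ℝ) 1 \ I') = 0 ∧ BijOn ψ I' K') ∧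
  (∀ F : Set ℝ, F ⊆ Icc (0:ℝ) 1 → MeasurableSet F →
      μH[s] (ψ '' F) = μH[s] K * volume F) ∧
  (∀ B : Set X, B ⊆ K → MeasurableSet B →
      volume (ψ ⁻¹' B ∩ Icc (0:ℝ) 1) = (μH[s] K)⁻¹ * μH[s] B) ∧
  ∃ c' : NNReal, 0 < c' ∧ HolderOnWith c' (Real.toNNReal (1 / s)) ψ (Icc (0:ℝ) 1)

end
noncomputable section
/-- The similitudes of a path-on-lattice IFS: `w ↦ αw + β` or `w ↦ α w̄ + β`. -/
def φfun (a b : ℂ) (c : Bool) : ℂ → ℂ :=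
  fun w => cond c (a * (starRingEnd ℂ) w + b) (a * w + b)

lemma φfun_dist (a b : ℂ) (c : Bool) (x y : ℂ) :
    dist (φfun a b c x) (φfun a b c y) = ‖a‖ * dist x y := by
  cases c
  · show dist (a * x + b) (a * y + b) = _
    rw [Complex.dist_eq, Complex.dist_eq,
      show a * x + b - (a * y + b) = a * (x - y) by ring, norm_mul]
  · show dist (a * (starRingEnd ℂ) x + b) (a * (starRingEnd ℂ) y + b) = _
    rw [Complex.dist_eq, Complex.dist_eq,
      show a * (starRingEnd ℂ) x + b - (a * (starRingEnd ℂ) y + b)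
          = a * ((starRingEnd ℂ) x - (starRingEnd ℂ) y) by ring,
      norm_mul, ← map_sub, Complex.norm_conj]

/-- A path-on-lattice IFS: a path `0 = z₀, z₁, …, z_n = d` of unit steps on the square
or triangular lattice, together with contracting similitudes `φ_k` (each of the form
`αz+β` or `αz̄+β`) such that `φ_k({0,d}) = {z_{k-1}, z_k}`. -/
structure PathOnLattice (n : ℕ) where
  z : Fin (n + 1) → ℂ
  hz0 : z 0 = 0
  lat : (∀ k, ∃ a b : ℤ, z k = (a : ℂ) + (b : ℂ) * Complex.I) ∨
        (∀ k, ∃ a b : ℤ, z k = (a : ℂ) + (b : ℂ) * Complex.exp (2 * Real.pi * Complex.I / 3))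
  hstep : ∀ k : Fin n, ‖z k.succ - z k.castSucc‖ = 1
  α : Fin n → ℂ
  β : Fin n → ℂ
  cj : Fin n → Bool
  hcontr : ∀ k, 0 < ‖α k‖ ∧ ‖α k‖ < 1
  hends : ∀ k : Fin n,
      (φfun (α k) (β k) (cj k) 0 = z k.castSucc ∧
        φfun (α k) (β k) (cj k) (z (Fin.last n)) = z k.succ) ∨
      (φfun (α k) (β k) (cj k) 0 = z k.succ ∧
        φfun (α k) (β k) (cj k) (z (Fin.last n)) = z k.castSucc)

namespace PathOnLattice

variable {n : ℕ} (Φ : PathOnLattice n)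

/-- The maps of the path-on-lattice IFS. -/
def φ (k : Fin n) : ℂ → ℂ := φfun (Φ.α k) (Φ.β k) (Φ.cj k)

/-- The endpoint `d` of the path. -/
def dd : ℂ := Φ.z (Fin.last n)

/-- `v_k = 1`, i.e. `(φ_k(0), φ_k(d)) = (z_{k-1}, z_k)`. -/
def vpos (k : Fin n) : Prop := Φ.φ k 0 = Φ.z k.castSucc

open Classical in
/-- The two-state ordered GIFS associated to a path-on-lattice IFS: state `0` stands
for the state `1` (with equation `E_1 = φ_1(E_{v_1}) + ⋯ + φ_n(E_{v_n})`) and state `1`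
stands for the state `-1` (with equation `E_{-1} = φ_n(E_{-v_n}) + ⋯ + φ_1(E_{-v_1})`);
the edges from state `1` are ordered by increasing `k`, those from state `-1` by
decreasing `k`. -/
def gifs : OGIFS ℂ 2 where
  Edge := Fin 2 × Fin n
  fintypeEdge := inferInstance
  src e := e.1
  tgt e := if e.1 = 0 then (if Φ.vpos e.2 then 0 else 1) else (if Φ.vpos e.2 then 1 else 0)
  r e := ‖Φ.α e.2‖
  r_pos e := (Φ.hcontr e.2).1
  r_lt_one e := (Φ.hcontr e.2).2
  g e := Φ.φ e.2
  g_sim e x y := φfun_dist _ _ _ x y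
  elt e f := e.1 = f.1 ∧ ((e.1 = 0 ∧ e.2 < f.2) ∨ (e.1 ≠ 0 ∧ f.2 < e.2))
  elt_src h := h.1
  elt_irrefl a h := by
    rcases h.2 with ⟨_, hl⟩ | ⟨_, hl⟩ <;> exact lt_irrefl _ hl
  elt_trans {a b c} hab hbc := by
    obtain ⟨h1, hab'⟩ := hab
    obtain ⟨h2, hbc'⟩ := hbc
    refine ⟨h1.trans h2, ?_⟩
    rcases hab' with ⟨ha0, hlt⟩ | ⟨ha0, hlt⟩
    · rcases hbc' with ⟨_, hlt'⟩ | ⟨hb0, hlt'⟩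
      · exact Or.inl ⟨ha0, hlt.trans hlt'⟩
      · exact absurd (h1 ▸ ha0) hb0
    · rcases hbc' with ⟨hb0, hlt'⟩ | ⟨_, hlt'⟩
      · exact absurd (h1 ▸ ha0) (fun hh => hh hb0)
      · exact Or.inr ⟨ha0, hlt'.trans hlt⟩
  elt_total a b hsrc := by
    have hab : a.1 = b.1 := hsrc
    rcases lt_trichotomy a.2 b.2 with h | h | h
    · by_cases ha : a.1 = 0
      · exact Or.inl ⟨hab, Or.inl ⟨ha, h⟩⟩
      · exact Or.inr (Or.inr ⟨hab.symm, Or.inr ⟨fun hb => ha (hab.trans hb), h⟩⟩)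
    · exact Or.inr (Or.inl (Prod.ext hab h))
    · by_cases ha : a.1 = 0
      · exact Or.inr (Or.inr ⟨hab.symm, Or.inl ⟨hab.symm.trans ha, h⟩⟩)
      · exact Or.inl ⟨hab, Or.inr ⟨ha, h⟩⟩

end PathOnLattice

/-!
Choosing the least edge out of each state (`φ_1` out of `1`, `φ_n` out of `-1`) and following
these edges forever gives the lowest infinite path. Since `φ_1` sends the endpoint of `E_{v_1}`
on the side of `z_0` to `z_0 = 0`, and `φ_n` sends the appropriate endpoint of `E_{-v_n}` to
`z_n = d`, the pair `(0, d)` is the fixed point of the contraction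
`(x_1, x_{-1}) ↦ (φ_1 (x_{v_1}), φ_n (x_{-v_n}))`. This contraction maps `E_1 × E_{-1}` into
itself, so `(0, d)` lies in it, and then in every cylinder along the lowest path: these are the
heads. The tails are obtained in the same way from the greatest edges and the pair `(d, 0)`.
-/

open Function

namespace GIFS

variable {X : Type} [MetricSpace X] {N : ℕ} (G : GIFS X N)

theorem pathTgt_cons (i : Fin N) (e : G.Edge) (γ : List G.Edge) :
    G.pathTgt i (e :: γ) = G.pathTgt (G.tgt e) γ := by
  cases γ with
  | nil => rfl
  | cons f γ =>
    simp only [pathTgt, List.getLast?_cons_cons]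
    cases h : (f :: γ).getLast? <;> simp_all

theorem pathSet_nil (E : Fin N → Set X) (i : Fin N) : G.pathSet E i [] = E i := by
  simp [pathSet, pathMap, pathTgt]

theorem pathSet_cons (E : Fin N → Set X) (i : Fin N) (e : G.Edge) (γ : List G.Edge) :
    G.pathSet E i (e :: γ) = G.g e '' G.pathSet E (G.tgt e) γ := by
  rw [pathSet, pathSet, pathTgt_cons, ← Set.image_comp]
  rfl

theorem isPathFrom_cons {i : Fin N} {e : G.Edge} {γ : List G.Edge}
    (h : G.IsPathFrom i (e :: γ)) : G.src e = i ∧ G.IsPathFrom (G.tgt e) γ := by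
  obtain ⟨hchain, hhead⟩ := h
  refine ⟨hhead e rfl, List.isChain_cons.mp hchain |>.2, fun f hf => ?_⟩
  cases γ with
  | nil => simp at hf
  | cons f' γ =>
    obtain rfl : f' = f := by simpa using hf
    exact ((List.isChain_cons_cons).mp hchain).1.symm

def maxRatio : NNReal := Finset.univ.sup fun e => (G.r e).toNNReal

theorem r_le_maxRatio (e : G.Edge) : G.r e ≤ G.maxRatio :=
  (Real.le_coe_toNNReal _).trans (NNReal.coe_le_coe.mpr
    (Finset.le_sup (f := fun e => (G.r e).toNNReal) (Finset.mem_univ e)))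

theorem maxRatio_lt_one : G.maxRatio < 1 :=
  Finset.sup_lt_iff one_pos |>.mpr fun e _ => Real.toNNReal_lt_one.mpr (G.r_lt_one e)

def selectorMap (sel : Fin N → G.Edge) (x : Fin N → X) : Fin N → X :=
  fun i => G.g (sel i) (x (G.tgt (sel i)))

theorem contractingWith_selectorMap (sel : Fin N → G.Edge) :
    ContractingWith G.maxRatio (G.selectorMap sel) := by
  refine ⟨G.maxRatio_lt_one, LipschitzWith.of_dist_le_mul fun x y => ?_⟩
  refine (dist_pi_le_iff (by positivity)).mpr fun i => ?_
  rw [selectorMap, selectorMap, G.g_sim]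
  exact mul_le_mul (G.r_le_maxRatio _) (dist_le_pi_dist x y _) dist_nonneg (by positivity)

/-- The selector map contracts the compact set `∏ E i` into itself, so its unique fixed point
lies there. -/
theorem IsInvariant.mem_of_isFixedPt_selectorMap {G : GIFS X N} {E : Fin N → Set X}
    (hE : G.IsInvariant E) {sel : Fin N → G.Edge} (hsel : ∀ i, G.src (sel i) = i)
    {p : Fin N → X} (hp : IsFixedPt (G.selectorMap sel) p) (i : Fin N) : p i ∈ E i := by
  obtain ⟨hne, hcomp, heq⟩ := hE
  have hmaps : MapsTo (G.selectorMap sel) (Set.univ.pi E) (Set.univ.pi E) :=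
    fun x hx j _ => (heq j).symm ▸ Set.mem_biUnion (hsel j) ⟨_, hx _ trivial, rfl⟩
  obtain ⟨x, hx⟩ := Set.univ_pi_nonempty_iff.mpr hne
  obtain ⟨y, hy, hfix, -⟩ := ContractingWith.exists_fixedPoint'
    (isCompact_univ_pi hcomp).isComplete hmaps
    ((G.contractingWith_selectorMap sel).restrict hmaps) hx (edist_ne_top _ _)
  rw [(G.contractingWith_selectorMap sel).fixedPoint_unique' hp hfix]
  exact hy i trivial

theorem IsInvariant.exists_src_eq {G : GIFS X N} {E : Fin N → Set X} (hE : G.IsInvariant E)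
    (i : Fin N) : ∃ e, G.src e = i := by
  obtain ⟨x, hx⟩ := hE.1 i
  rw [hE.2.2 i, Set.mem_iUnion₂] at hx
  obtain ⟨e, he, -⟩ := hx
  exact ⟨e, he⟩

def greedyPath (sel : Fin N → G.Edge) (hsel : ∀ i, G.src (sel i) = i) (i : Fin N) :
    G.InfPath i :=
  ⟨fun k => sel ((fun j => G.tgt (sel j))^[k] i), hsel i,
    fun k => by simp only [iterate_succ_apply', hsel]⟩

theorem prefixList_greedyPath_succ (sel : Fin N → G.Edge) (hsel : ∀ i, G.src (sel i) = i)
    (i : Fin N) (m : ℕ) :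
    prefixList (G.greedyPath sel hsel i).1 (m + 1) =
      sel i :: prefixList (G.greedyPath sel hsel (G.tgt (sel i))).1 m := by
  simp only [prefixList, List.ofFn_succ, greedyPath, Fin.val_zero, iterate_zero, id,
    Fin.val_succ, iterate_succ_apply]

theorem mem_pathSet_greedyPath {E : Fin N → Set X} {sel : Fin N → G.Edge}
    (hsel : ∀ i, G.src (sel i) = i) {p : Fin N → X} (hpE : ∀ i, p i ∈ E i)
    (hp : IsFixedPt (G.selectorMap sel) p) (m : ℕ) (i : Fin N) :
    p i ∈ G.pathSet E i (prefixList (G.greedyPath sel hsel i).1 m) := by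
  induction m generalizing i with
  | zero => simpa [prefixList, pathSet_nil] using hpE i
  | succ m ih =>
    rw [prefixList_greedyPath_succ, pathSet_cons]
    exact ⟨_, ih _, congrFun hp i⟩

theorem greedyPath_lex_le {sel : Fin N → G.Edge} (hsel : ∀ i, G.src (sel i) = i)
    {r : G.Edge → G.Edge → Prop} (hmin : ∀ f, f = sel (G.src f) ∨ r (sel (G.src f)) f)
    (m : ℕ) (i : Fin N) (γ : List G.Edge) (hγ : G.IsPathFrom i γ) (hlen : γ.length = m) :
    γ = prefixList (G.greedyPath sel hsel i).1 m ∨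
      List.Lex r (prefixList (G.greedyPath sel hsel i).1 m) γ := by
  induction m generalizing i γ with
  | zero => exact .inl (List.length_eq_zero_iff.mp hlen)
  | succ m ih =>
    obtain _ | ⟨f, γ⟩ := γ
    · simp at hlen
    obtain ⟨rfl, hγ'⟩ := G.isPathFrom_cons hγ
    rw [prefixList_greedyPath_succ]
    rcases hmin f with hf | hf
    · rw [← hf]
      rcases ih _ γ hγ' (by simpa using hlen) with h | h
      · exact .inl (h ▸ rfl)
      · exact .inr (.cons h)
    · exact .inr (.rel hf)

end GIFS

theorem List.lex_of_lex_swap_of_length_eq {α : Type*} {r : α → α → Prop} {l₁ l₂ : List α}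
    (h : List.Lex (Function.swap r) l₁ l₂) (hlen : l₁.length = l₂.length) : List.Lex r l₂ l₁ := by
  induction h with
  | nil => simp at hlen
  | rel h => exact .rel h
  | cons _ ih => exact .cons (ih (by simpa using hlen))

namespace OGIFS

variable {X : Type} [MetricSpace X] {N : ℕ} {G : OGIFS X N} {E : Fin N → Set X}
  {sel : Fin N → G.Edge} {p : Fin N → X}

theorem isHead_of_isFixedPt_selectorMap (hE : G.IsInvariant E) (hsel : ∀ i, G.src (sel i) = i)
    (hmin : ∀ f, f = sel (G.src f) ∨ G.elt (sel (G.src f)) f)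
    (hp : IsFixedPt (G.selectorMap sel) p) (i : Fin N) : G.IsHead E i (p i) :=
  ⟨G.greedyPath sel hsel i, fun m γ hγ hlen => G.greedyPath_lex_le hsel hmin m i γ hγ hlen,
    fun m => G.mem_pathSet_greedyPath hsel (hE.mem_of_isFixedPt_selectorMap hsel hp) hp m i⟩

theorem isTail_of_isFixedPt_selectorMap (hE : G.IsInvariant E) (hsel : ∀ i, G.src (sel i) = i)
    (hmax : ∀ f, f = sel (G.src f) ∨ G.elt f (sel (G.src f)))
    (hp : IsFixedPt (G.selectorMap sel) p) (i : Fin N) : G.IsTail E i (p i) := by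
  refine ⟨G.greedyPath sel hsel i, fun m γ hγ hlen => ?_,
    fun m => G.mem_pathSet_greedyPath hsel (hE.mem_of_isFixedPt_selectorMap hsel hp) hp m i⟩
  refine (G.greedyPath_lex_le hsel (r := swap G.elt) hmax m i γ hγ hlen).imp_right
    fun h => List.lex_of_lex_swap_of_length_eq h ?_
  simp [prefixList, hlen]

end OGIFS

namespace PathOnLattice

section

variable {n : ℕ} (Φ : PathOnLattice n)

theorem z_succ_ne_z_castSucc (k : Fin n) : Φ.z k.succ ≠ Φ.z k.castSucc := fun h => by
  simpa [h] using Φ.hstep k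

theorem φ_ends_of_vpos {k : Fin n} (hk : Φ.vpos k) :
    Φ.φ k 0 = Φ.z k.castSucc ∧ Φ.φ k Φ.dd = Φ.z k.succ :=
  (Φ.hends k).resolve_right fun h => Φ.z_succ_ne_z_castSucc k (h.1.symm.trans hk)

theorem φ_ends_of_not_vpos {k : Fin n} (hk : ¬Φ.vpos k) :
    Φ.φ k 0 = Φ.z k.succ ∧ Φ.φ k Φ.dd = Φ.z k.castSucc :=
  (Φ.hends k).resolve_left fun h => hk h.1

theorem φ_ends_tgt (s : Fin 2) (k : Fin n) :
    Φ.φ k (![0, Φ.dd] (Φ.gifs.tgt (s, k))) =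
      if s = 0 then Φ.z k.castSucc else Φ.z k.succ := by
  by_cases hk : Φ.vpos k
  · fin_cases s <;> simp [gifs, hk, Φ.φ_ends_of_vpos hk]
  · fin_cases s <;> simp [gifs, hk, Φ.φ_ends_of_not_vpos hk]

theorem φ_ends_swap_tgt (s : Fin 2) (k : Fin n) :
    Φ.φ k (![Φ.dd, 0] (Φ.gifs.tgt (s, k))) =
      if s = 0 then Φ.z k.succ else Φ.z k.castSucc := by
  by_cases hk : Φ.vpos k
  · fin_cases s <;> simp [gifs, hk, Φ.φ_ends_of_vpos hk]
  · fin_cases s <;> simp [gifs, hk, Φ.φ_ends_of_not_vpos hk]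

end

section

variable {m : ℕ} (Φ : PathOnLattice (m + 1))

def firstEdge : Fin 2 → Fin 2 × Fin (m + 1) := ![(0, 0), (1, Fin.last m)]

def lastEdge : Fin 2 → Fin 2 × Fin (m + 1) := ![(0, Fin.last m), (1, 0)]

theorem src_firstEdge (i : Fin 2) : Φ.gifs.src (firstEdge i) = i := by
  fin_cases i <;> rfl

theorem src_lastEdge (i : Fin 2) : Φ.gifs.src (lastEdge i) = i := by
  fin_cases i <;> rfl

theorem firstEdge_le (f : Fin 2 × Fin (m + 1)) :
    f = firstEdge (Φ.gifs.src f) ∨ Φ.gifs.elt (firstEdge (Φ.gifs.src f)) f := by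
  obtain ⟨s, k⟩ := f
  fin_cases s
  · rcases (Fin.zero_le k).eq_or_lt with rfl | h
    · exact .inl rfl
    · exact .inr ⟨rfl, .inl ⟨rfl, h⟩⟩
  · rcases (Fin.le_last k).eq_or_lt with rfl | h
    · exact .inl rfl
    · exact .inr ⟨rfl, .inr ⟨one_ne_zero, h⟩⟩

theorem le_lastEdge (f : Fin 2 × Fin (m + 1)) :
    f = lastEdge (Φ.gifs.src f) ∨ Φ.gifs.elt f (lastEdge (Φ.gifs.src f)) := by
  obtain ⟨s, k⟩ := f
  fin_cases s
  · rcases (Fin.le_last k).eq_or_lt with rfl | h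
    · exact .inl rfl
    · exact .inr ⟨rfl, .inl ⟨rfl, h⟩⟩
  · rcases (Fin.zero_le k).eq_or_lt with rfl | h
    · exact .inl rfl
    · exact .inr ⟨rfl, .inr ⟨one_ne_zero, h⟩⟩

theorem isFixedPt_firstEdge : IsFixedPt (Φ.gifs.selectorMap firstEdge) ![0, Φ.dd] := by
  funext i
  fin_cases i
  · show Φ.φ 0 (![0, Φ.dd] (Φ.gifs.tgt (0, 0))) = 0
    rw [φ_ends_tgt, if_pos rfl, Fin.castSucc_zero, Φ.hz0]
  · show Φ.φ (Fin.last m) (![0, Φ.dd] (Φ.gifs.tgt (1, Fin.last m))) = Φ.dd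
    rw [φ_ends_tgt, if_neg one_ne_zero, Fin.succ_last]
    rfl

theorem isFixedPt_lastEdge : IsFixedPt (Φ.gifs.selectorMap lastEdge) ![Φ.dd, 0] := by
  funext i
  fin_cases i
  · show Φ.φ (Fin.last m) (![Φ.dd, 0] (Φ.gifs.tgt (0, Fin.last m))) = Φ.dd
    rw [φ_ends_swap_tgt, if_pos rfl, Fin.succ_last]
    rfl
  · show Φ.φ 0 (![Φ.dd, 0] (Φ.gifs.tgt (1, 0))) = 0
    rw [φ_ends_swap_tgt, if_neg one_ne_zero, Fin.castSucc_zero, Φ.hz0]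

end

end PathOnLattice

/-- For the two-state ordered GIFS associated to a path-on-lattice IFS with path from
`0` to `d`: the head of `E_1` is `0` and its tail is `d`, while the head of `E_{-1}`
is `d` and its tail is `0`. -/
theorem pathOnLattice_head_tail {n : ℕ} (Φ : PathOnLattice n)
    (E : Fin 2 → Set ℂ) (hE : Φ.gifs.toGIFS.IsInvariant E) :
    Φ.gifs.IsHead E 0 0 ∧ Φ.gifs.IsTail E 0 Φ.dd ∧
    Φ.gifs.IsHead E 1 Φ.dd ∧ Φ.gifs.IsTail E 1 0 := by
  obtain ⟨e, -⟩ := hE.exists_src_eq 0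
  obtain ⟨m, rfl⟩ := Nat.exists_eq_add_one_of_ne_zero (Prod.snd (e : Fin 2 × Fin n)).pos.ne'
  have head := OGIFS.isHead_of_isFixedPt_selectorMap hE Φ.src_firstEdge Φ.firstEdge_le
    Φ.isFixedPt_firstEdge
  have tail := OGIFS.isTail_of_isFixedPt_selectorMap hE Φ.src_lastEdge Φ.le_lastEdge
    Φ.isFixedPt_lastEdge
  exact ⟨head 0, tail 0, head 1, tail 1⟩
end
end

section
/- Let (A,Γ,G,≺) be a linear GIFS on ℝ^d with open set condition and 0 < h_i := H^δ(E_i) < ∞ for all i, let G* be its measure-recording GIFS, and let ψ_i = π_i ∘ ρ_i^{−1} : F_i → E_i. Then ψ_i is 1/δ-Hölder continuous; more precisely, |ψ_i(x_1) − ψ_i(x_2)| ≤ 2D · r_min^{−1} · h^{−1/δ} · |x_1 − x_2|^{1/δ} for all x_1, x_2 ∈ F_i, where D = max_{1≤j≤N} diam E_j, r_min = min_{e∈Γ} r_e, and h = min_{1≤j≤N} h_j. -/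
open MeasureTheory Set

noncomputable section

open Filter Topology

/-!
Subadditivity of `μH[δ]` along the set equation `E_j = ⋃_{e ∈ Γ_j} g_e(E_{t(e)})` gives
`h_j ≤ ∑_{e ∈ Γ_j} r_e^δ h_{t(e)}`, so the first-level intervals `f_e(F_{t(e)})` cover `F_j`.
Hence every point of a cylinder interval `F_γ` is the `ρ`-image of an infinite path through `γ`,
and `ψ` maps `F_γ` into the cylinder `E_γ`, of diameter at most `r_γ D`.

Given `x₁ < x₂`, choose `ε` with `(ε r_min)^δ h = x₂ - x₁`. Stopping every coding at its first
prefix `γ` with `r_γ ≤ ε` yields finitely many cylinder intervals covering `F_i`, each of length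
`r_γ^δ h_{t(γ)} ≥ x₂ - x₁`. Two of them are linked through a common point and contain `x₁`
and `x₂` respectively, whence `|ψ(x₁) - ψ(x₂)| ≤ 2 ε D`.
-/

theorem exists_chain_of_finite_cover {ι : Type*} {S : Set ι} (hS : S.Finite) {a b : ι → ℝ}
    {x y : ℝ} (hxy : x ≤ y) (hcover : ∀ z ∈ Icc x y, ∃ k ∈ S, z ∈ Icc (a k) (b k))
    (hlen : ∀ k ∈ S, y - x ≤ b k - a k) :
    ∃ k ∈ S, ∃ l ∈ S, ∃ c, x ∈ Icc (a k) (b k) ∧ c ∈ Icc (a k) (b k) ∧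
      c ∈ Icc (a l) (b l) ∧ y ∈ Icc (a l) (b l) := by
  obtain ⟨k, ⟨hkS, hxk⟩, hkmax⟩ := Set.exists_max_image {k ∈ S | x ∈ Icc (a k) (b k)} b
    (hS.subset (sep_subset _ _)) (hcover x ⟨le_rfl, hxy⟩)
  by_cases hyk : y ≤ b k
  · exact ⟨k, hkS, k, hkS, x, hxk, hxk, hxk, hxk.1.trans hxy, hyk⟩
  push Not at hyk
  -- The interval covering a point just right of `b k` starts at or before `b k`, and after `x`
  -- by maximality of `b k`; being long enough, it reaches `y`.
  have hev : ∀ᶠ p in 𝓝[>] (b k), b k < p ∧ p < y ∧ ∀ l ∈ S, b k < a l → p < a l := by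
    refine (eventually_mem_nhdsWithin (s := Ioi (b k))).and <|
      ((eventually_lt_nhds hyk).filter_mono nhdsWithin_le_nhds).and <|
      (eventually_all_finite hS).2 fun l _ => ?_
    by_cases hl : b k < a l
    · exact ((eventually_lt_nhds hl).mono fun p hp _ => hp).filter_mono nhdsWithin_le_nhds
    · exact Eventually.of_forall fun p h => absurd h hl
  obtain ⟨p, hkp, hpy, hpa⟩ := hev.exists
  obtain ⟨l, hlS, hpl⟩ := hcover p ⟨hxk.2.trans hkp.le, hpy.le⟩
  have hal : a l ≤ b k := not_lt.1 fun h => (hpa l hlS h).not_ge hpl.1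
  have hxl : x < a l := lt_of_not_ge fun h =>
    (hkmax l ⟨hlS, h, hxk.2.trans (hkp.le.trans hpl.2)⟩).not_gt (hkp.trans_le hpl.2)
  exact ⟨k, hkS, l, hlS, b k, hxk, ⟨hxk.1.trans hxk.2, le_rfl⟩, ⟨hal, hkp.le.trans hpl.2⟩,
    hal.trans hyk.le, by linarith [hlen l hlS]⟩

section PartialSums

variable {α : Type*} {s : Finset α} {lt : α → α → Prop} [DecidableRel lt] {ℓ : α → ℝ}

theorem sum_filter_lt_add_le_of_lt (htrans : ∀ {a b c}, lt a b → lt b c → lt a c)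
    (hirr : ∀ a, ¬ lt a a) (hℓ : ∀ a ∈ s, 0 ≤ ℓ a) {a b : α} (ha : a ∈ s) (hab : lt a b) :
    ∑ x ∈ s.filter (lt · a), ℓ x + ℓ a ≤ ∑ x ∈ s.filter (lt · b), ℓ x := by
  classical
  rw [add_comm, ← Finset.sum_insert (by simp [hirr])]
  refine Finset.sum_le_sum_of_subset_of_nonneg ?_ fun x hx _ => hℓ x (Finset.mem_filter.1 hx).1
  intro x hx
  rcases Finset.mem_insert.1 hx with rfl | hx
  · exact Finset.mem_filter.2 ⟨ha, hab⟩
  · obtain ⟨hxs, hxa⟩ := Finset.mem_filter.1 hx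
    exact Finset.mem_filter.2 ⟨hxs, htrans hxa hab⟩

theorem sum_le_sum_filter_lt_add (hirr : ∀ a, ¬ lt a a) (hℓ : ∀ a ∈ s, 0 ≤ ℓ a) {a : α}
    (ha : a ∈ s) {t : Finset α} (hts : t ⊆ s) (ht : ∀ x ∈ t, lt x a ∨ x = a) :
    ∑ x ∈ t, ℓ x ≤ ∑ x ∈ s.filter (lt · a), ℓ x + ℓ a := by
  classical
  rw [add_comm, ← Finset.sum_insert (by simp [hirr])]
  refine Finset.sum_le_sum_of_subset_of_nonneg ?_ fun x hx _ =>
    hℓ x (Finset.insert_subset ha (Finset.filter_subset _ _) hx)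
  intro x hx
  rcases ht x hx with h | rfl
  · exact Finset.mem_insert_of_mem (Finset.mem_filter.2 ⟨hts hx, h⟩)
  · exact Finset.mem_insert_self _ _

theorem exists_sum_filter_lt_le_le (htrans : ∀ {a b c}, lt a b → lt b c → lt a c)
    (hirr : ∀ a, ¬ lt a a) (htot : ∀ a ∈ s, ∀ b ∈ s, lt a b ∨ a = b ∨ lt b a)
    (hℓ : ∀ a ∈ s, 0 < ℓ a) (hs : s.Nonempty) {y : ℝ} (hy0 : 0 ≤ y) (hy : y ≤ ∑ x ∈ s, ℓ x) :
    ∃ a ∈ s, ∑ x ∈ s.filter (lt · a), ℓ x ≤ y ∧ y ≤ ∑ x ∈ s.filter (lt · a), ℓ x + ℓ a := by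
  classical
  set P : α → ℝ := fun a => ∑ x ∈ s.filter (lt · a), ℓ x with hP
  have hℓ' : ∀ a ∈ s, 0 ≤ ℓ a := fun a ha => (hℓ a ha).le
  have hmono : ∀ {a b}, a ∈ s → lt a b → P a + ℓ a ≤ P b := fun ha hab => by
    simpa only [hP] using sum_filter_lt_add_le_of_lt @htrans hirr hℓ' ha hab
  have hle_of_subset : ∀ a ∈ s, ∀ t ⊆ s, (∀ x ∈ t, lt x a ∨ x = a) →
      ∑ x ∈ t, ℓ x ≤ P a + ℓ a := fun a ha t hts ht => by
    simpa only [hP] using sum_le_sum_filter_lt_add hirr hℓ' ha hts ht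
  obtain ⟨a₀, ha₀, ha₀min⟩ := s.exists_min_image P hs
  have hP₀ : P a₀ = 0 := by
    refine Finset.sum_eq_zero fun x hx => ?_
    obtain ⟨hxs, hx⟩ := Finset.mem_filter.1 hx
    linarith [hmono hxs hx, ha₀min x hxs, hℓ x hxs]
  obtain ⟨a, ha, hamax⟩ :=
    (s.filter (P · ≤ y)).exists_max_image P ⟨a₀, Finset.mem_filter.2 ⟨ha₀, hP₀ ▸ hy0⟩⟩
  obtain ⟨has, hay⟩ := Finset.mem_filter.1 ha
  refine ⟨a, has, hay, ?_⟩
  by_contra! hlt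
  by_cases hV : (s.filter (lt a ·)).Nonempty
  · -- the `≺`-successor `b` of `a` starts no later than `a` ends, contradicting maximality
    obtain ⟨b, hb, hbmin⟩ := (s.filter (lt a ·)).exists_min_image P hV
    obtain ⟨hbs, hab⟩ := Finset.mem_filter.1 hb
    have hPb : P b ≤ P a + ℓ a := hle_of_subset a has _ (Finset.filter_subset _ _) fun x hx => by
      obtain ⟨hxs, hxb⟩ := Finset.mem_filter.1 hx
      rcases htot x hxs a has with h | h | h
      · exact Or.inl h
      · exact Or.inr h
      · linarith [hmono hxs hxb, hℓ x hxs, hbmin x (Finset.mem_filter.2 ⟨hxs, h⟩)]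
    linarith [hamax b (Finset.mem_filter.2 ⟨hbs, by linarith⟩), hmono has hab, hℓ a has]
  · have := hle_of_subset a has s subset_rfl fun x hx => by
      rcases htot x hx a has with h | h | h
      · exact Or.inl h
      · exact Or.inr h
      · exact absurd ⟨x, Finset.mem_filter.2 ⟨hx, h⟩⟩ hV
    linarith

end PartialSums

section Prefix

variable {α : Type} (ω : ℕ → α)

theorem prefixList_zero : prefixList ω 0 = [] := rfl

theorem prefixList_succ (n : ℕ) : prefixList ω (n + 1) = prefixList ω n ++ [ω n] := by
  rw [prefixList, List.ofFn_succ', List.concat_eq_append]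
  rfl

@[simp]
theorem length_prefixList (n : ℕ) : (prefixList ω n).length = n := by
  simp [prefixList]

theorem prefixList_congr {ω' : ℕ → α} {n : ℕ} (h : ∀ k < n, ω k = ω' k) :
    prefixList ω n = prefixList ω' n := by
  simp only [prefixList]
  exact congrArg List.ofFn (funext fun k => h k k.isLt)

end Prefix

namespace GIFS

variable {X : Type} [MetricSpace X] {N : ℕ} (G : GIFS X N)

@[simp]
theorem pathTgt_nil (i : Fin N) : G.pathTgt i [] = i := rfl

theorem pathTgt_append_singleton (i : Fin N) (γ : List G.Edge) (e : G.Edge) :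
    G.pathTgt i (γ ++ [e]) = G.tgt e := by
  simp [pathTgt]

theorem pathTgt_append (i : Fin N) (γ σ : List G.Edge) :
    G.pathTgt i (γ ++ σ) = G.pathTgt (G.pathTgt i γ) σ := by
  induction σ using List.reverseRecOn with
  | nil => simp [pathTgt]
  | append_singleton σ e _ => rw [← List.append_assoc, pathTgt_append_singleton,
      pathTgt_append_singleton]

theorem pathTgt_prefixList_succ (i : Fin N) (ω : ℕ → G.Edge) (n : ℕ) :
    G.pathTgt i (prefixList ω (n + 1)) = G.tgt (ω n) := by
  rw [prefixList_succ, pathTgt_append_singleton]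

def pathRatio (γ : List G.Edge) : ℝ := (γ.map G.r).prod

@[simp]
theorem pathRatio_nil : G.pathRatio [] = 1 := rfl

theorem pathRatio_cons (e : G.Edge) (γ : List G.Edge) :
    G.pathRatio (e :: γ) = G.r e * G.pathRatio γ := by
  simp [pathRatio]

theorem pathRatio_append_singleton (γ : List G.Edge) (e : G.Edge) :
    G.pathRatio (γ ++ [e]) = G.pathRatio γ * G.r e := by
  simp [pathRatio]

theorem pathRatio_pos (γ : List G.Edge) : 0 < G.pathRatio γ :=
  List.prod_pos fun _ hx => by
    obtain ⟨e, -, rfl⟩ := List.mem_map.1 hx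
    exact G.r_pos e

theorem pathRatio_prefixList_le_pow {q : ℝ} (hq : ∀ e, G.r e ≤ q) (ω : ℕ → G.Edge) (n : ℕ) :
    G.pathRatio (prefixList ω n) ≤ q ^ n := by
  simpa [pathRatio, prefixList, List.map_ofFn, List.prod_ofFn] using
    Finset.prod_le_prod (s := Finset.univ) (fun (k : Fin n) _ => (G.r_pos (ω k)).le)
      fun k _ => hq (ω k)

theorem exists_forall_r_le : ∃ q, 0 ≤ q ∧ q < 1 ∧ ∀ e, G.r e ≤ q := by
  cases isEmpty_or_nonempty G.Edge with
  | inl _ => exact ⟨0, le_rfl, zero_lt_one, isEmptyElim⟩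
  | inr _ =>
    obtain ⟨e, he⟩ := Finite.exists_max G.r
    exact ⟨G.r e, (G.r_pos e).le, G.r_lt_one e, he⟩

theorem dist_pathMap (γ : List G.Edge) (x y : X) :
    dist (G.pathMap γ x) (G.pathMap γ y) = G.pathRatio γ * dist x y := by
  induction γ with
  | nil => simp [pathMap]
  | cons e γ ih =>
    simp only [pathMap, List.foldr_cons, Function.comp_apply] at ih ⊢
    rw [G.g_sim, ih, pathRatio_cons, mul_assoc]

theorem dist_le_of_mem_pathSet {E : Fin N → Set X} (hE : ∀ j, Bornology.IsBounded (E j))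
    {i : Fin N} {γ : List G.Edge} {x y : X} (hx : x ∈ G.pathSet E i γ)
    (hy : y ∈ G.pathSet E i γ) :
    dist x y ≤ G.pathRatio γ * Metric.diam (E (G.pathTgt i γ)) := by
  obtain ⟨x, hx, rfl⟩ := hx
  obtain ⟨y, hy, rfl⟩ := hy
  rw [dist_pathMap]
  exact mul_le_mul_of_nonneg_left (Metric.dist_le_diam_of_mem (hE _) hx hy)
    (G.pathRatio_pos γ).le

namespace InfPath

variable {G} {i : Fin N}

def splice (σ : G.InfPath i) (n : ℕ) (τ : G.InfPath (G.pathTgt i (prefixList σ.1 n))) :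
    G.InfPath i :=
  ⟨fun k => if k < n then σ.1 k else τ.1 (k - n), by
    rcases Nat.eq_zero_or_pos n with rfl | hn
    · simpa [prefixList_zero] using τ.2.1
    · simpa [hn] using σ.2.1, fun k => by
    rcases lt_trichotomy (k + 1) n with hk | hk | hk
    · simp [hk, Nat.lt_of_succ_lt hk, σ.2.2 k]
    · simp [← hk, τ.2.1, pathTgt_prefixList_succ]
    · simp [show ¬ k < n by omega, show ¬ k + 1 < n by omega, τ.2.2 (k - n),
        show k + 1 - n = k - n + 1 by omega]⟩

theorem prefixList_splice (σ : G.InfPath i) (n : ℕ)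
    (τ : G.InfPath (G.pathTgt i (prefixList σ.1 n))) (m : ℕ) :
    prefixList (σ.splice n τ).1 (n + m) = prefixList σ.1 n ++ prefixList τ.1 m := by
  induction m with
  | zero =>
    rw [add_zero, prefixList_zero, List.append_nil]
    exact prefixList_congr _ fun k hk => by simp [splice, hk]
  | succ m ih =>
    rw [← add_assoc, prefixList_succ, ih, prefixList_succ, List.append_assoc]
    simp [splice]

end InfPath

end GIFS

/-- `(M(δ) h)_j = ∑_{e ∈ Γ_j} h_{t(e)} r_e^δ`. -/
def GIFS.childMass {X : Type} [MetricSpace X] {N : ℕ} (G : GIFS X N) (δ : ℝ) (h : Fin N → ℝ)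
    (j : Fin N) : ℝ :=
  ∑ e ∈ Finset.univ.filter (fun e => G.src e = j), h (G.tgt e) * G.r e ^ δ

theorem GIFS.le_childMass_of_subset_biUnion {X : Type} [MetricSpace X] [MeasurableSpace X]
    [BorelSpace X] {N : ℕ} (G : GIFS X N) {E : Fin N → Set X}
    (hE : ∀ j, E j ⊆ ⋃ e ∈ {e : G.Edge | G.src e = j}, G.g e '' E (G.tgt e)) {δ : ℝ}
    (hδ : 0 ≤ δ) (hfin : ∀ j, μH[δ] (E j) ≠ ⊤) {h : Fin N → ℝ}
    (hh : ∀ j, h j = (μH[δ] (E j)).toReal) (j : Fin N) : h j ≤ G.childMass δ h j := by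
  set s := Finset.univ.filter fun e => G.src e = j
  set K : G.Edge → NNReal := fun e => (G.r e).toNNReal
  have hterm : ∀ e, μH[δ] (G.g e '' E (G.tgt e)) ≤ (K e : ENNReal) ^ δ * μH[δ] (E (G.tgt e)) :=
    fun e => (LipschitzWith.of_dist_le_mul fun x y => by
      rw [G.g_sim, Real.coe_toNNReal _ (G.r_pos e).le]).hausdorffMeasure_image_le hδ _
  have hfin' : ∀ e, (K e : ENNReal) ^ δ * μH[δ] (E (G.tgt e)) ≠ ⊤ := fun e =>
    ENNReal.mul_ne_top (ENNReal.rpow_ne_top_of_nonneg hδ ENNReal.coe_ne_top) (hfin _)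
  have hsub : μH[δ] (E j) ≤ ∑ e ∈ s, (K e : ENNReal) ^ δ * μH[δ] (E (G.tgt e)) :=
    calc μH[δ] (E j) ≤ μH[δ] (⋃ e ∈ s, G.g e '' E (G.tgt e)) :=
          measure_mono (by simpa [s] using hE j)
      _ ≤ ∑ e ∈ s, μH[δ] (G.g e '' E (G.tgt e)) := measure_biUnion_finset_le _ _
      _ ≤ _ := Finset.sum_le_sum fun e _ => hterm e
  calc h j = (μH[δ] (E j)).toReal := hh j
    _ ≤ (∑ e ∈ s, (K e : ENNReal) ^ δ * μH[δ] (E (G.tgt e))).toReal :=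
        ENNReal.toReal_mono (ENNReal.sum_ne_top.2 fun e _ => hfin' e) hsub
    _ = G.childMass δ h j := by
        rw [ENNReal.toReal_sum fun e _ => hfin' e, GIFS.childMass]
        refine Finset.sum_congr rfl fun e _ => ?_
        rw [ENNReal.toReal_mul, ← ENNReal.toReal_rpow, ← hh, ENNReal.coe_toReal,
          Real.coe_toNNReal _ (G.r_pos e).le, mul_comm]

namespace OGIFS

variable {X : Type} [MetricSpace X] {N : ℕ} (G : OGIFS X N) {δ : ℝ} {h : Fin N → ℝ}

theorem fPathMap_singleton (e : G.Edge) : G.fPathMap δ h [e] = G.fmap δ h e := rfl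

theorem fPathMap_append (γ σ : List G.Edge) :
    G.fPathMap δ h (γ ++ σ) = G.fPathMap δ h γ ∘ G.fPathMap δ h σ := by
  induction γ with
  | nil => rfl
  | cons e γ ih => simp only [fPathMap, List.cons_append, List.foldr_cons] at ih ⊢; rw [ih]; rfl

theorem fPathMap_apply (γ : List G.Edge) (x : ℝ) :
    G.fPathMap δ h γ x = G.pathRatio γ ^ δ * x + G.fPathMap δ h γ 0 := by
  induction γ generalizing x with
  | nil => simp [fPathMap]
  | cons e γ ih =>
    simp only [fPathMap, List.foldr_cons, Function.comp_apply, fmap] at ih ⊢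
    rw [ih x, ih 0, GIFS.pathRatio_cons,
      Real.mul_rpow (G.r_pos e).le (G.pathRatio_pos γ).le]
    ring

theorem fPathSet_eq_Icc (i : Fin N) (γ : List G.Edge) :
    G.fPathSet δ h i γ = Icc (G.fPathMap δ h γ 0)
      (G.pathRatio γ ^ δ * h (G.pathTgt i γ) + G.fPathMap δ h γ 0) := by
  rw [fPathSet]
  conv_lhs => rw [funext (G.fPathMap_apply γ),
    image_affine_Icc' (Real.rpow_pos_of_pos (G.pathRatio_pos γ) δ), mul_zero, zero_add]

theorem fPathSet_append (i : Fin N) (γ σ : List G.Edge) :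
    G.fPathSet δ h i (γ ++ σ) = G.fPathMap δ h γ '' G.fPathSet δ h (G.pathTgt i γ) σ := by
  rw [fPathSet, fPathSet, fPathMap_append, GIFS.pathTgt_append, image_comp]

theorem exists_mem_fmap_image (hpos : ∀ j, 0 < h j) {j : Fin N} (hj : h j ≤ G.childMass δ h j)
    {y : ℝ} (hy : y ∈ Icc 0 (h j)) :
    ∃ e, G.src e = j ∧ y ∈ G.fmap δ h e '' Icc 0 (h (G.tgt e)) := by
  classical
  set s := Finset.univ.filter fun e => G.src e = j
  have hs : s.Nonempty := Finset.nonempty_of_sum_ne_zero (f := fun e => h (G.tgt e) * G.r e ^ δ)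
    (by rw [GIFS.childMass] at hj; linarith [hpos j])
  obtain ⟨e, he, hb, hy'⟩ := exists_sum_filter_lt_le_le (lt := G.elt) G.elt_trans G.elt_irrefl
    (fun a ha b hb => G.elt_total a b (by simp_all [s]))
    (fun e _ => mul_pos (hpos _) (Real.rpow_pos_of_pos (G.r_pos e) δ)) hs hy.1 (hy.2.trans hj)
  have hsrc : G.src e = j := (Finset.mem_filter.1 he).2
  have hbCoef : G.bCoef δ h e = ∑ x ∈ s.filter (G.elt · e), h (G.tgt x) * G.r x ^ δ := by
    rw [bCoef, ← Finset.sum_filter]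
    congr 1
    ext x
    simpa [s] using fun hx => (G.elt_src hx).trans hsrc
  refine ⟨e, hsrc, ?_⟩
  rw [show G.fmap δ h e = (G.r e ^ δ * · + G.bCoef δ h e) from rfl,
    image_affine_Icc' (Real.rpow_pos_of_pos (G.r_pos e) δ), hbCoef]
  constructor <;> linarith [mul_comm (h (G.tgt e)) (G.r e ^ δ)]

theorem exists_infPath_forall_mem_fPathSet (hpos : ∀ j, 0 < h j)
    (hsub : ∀ j, h j ≤ G.childMass δ h j) {j : Fin N} {y : ℝ} (hy : y ∈ Icc 0 (h j)) :
    ∃ τ : G.InfPath j, ∀ n, y ∈ G.fPathSet δ h j (prefixList τ.1 n) := by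
  have step : ∀ s : Σ v, Icc 0 (h v), ∃ e : G.Edge, ∃ x : Icc 0 (h (G.tgt e)),
      G.src e = s.1 ∧ G.fmap δ h e x = s.2 := fun ⟨v, y, hy⟩ => by
    obtain ⟨e, he, x, hx, hxy⟩ := G.exists_mem_fmap_image hpos (hsub v) hy
    exact ⟨e, ⟨x, hx⟩, he, hxy⟩
  choose edge pt hsrc hpt using step
  -- a state `⟨v, x⟩` records the current vertex and the preimage of `y` in `F_v`
  let next : (Σ v, Icc 0 (h v)) → Σ v, Icc 0 (h v) := fun s => ⟨G.tgt (edge s), pt s⟩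
  let st : ℕ → Σ v, Icc 0 (h v) := fun n => next^[n] ⟨j, y, hy⟩
  have hst : ∀ n, st (n + 1) = next (st n) := fun n => Function.iterate_succ_apply' next n _
  let τ : G.InfPath j :=
    ⟨fun n => edge (st n), hsrc _, fun n => by simp only [hst, hsrc]; rfl⟩
  have key : ∀ n, G.pathTgt j (prefixList τ.1 n) = (st n).1 ∧
      G.fPathMap δ h (prefixList τ.1 n) (st n).2 = y := by
    intro n
    induction n with
    | zero => exact ⟨rfl, rfl⟩
    | succ n ih =>
      rw [GIFS.pathTgt_prefixList_succ, prefixList_succ, fPathMap_append, hst]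
      refine ⟨rfl, ?_⟩
      rw [Function.comp_apply, fPathMap_singleton, hpt, ih.2]
  refine ⟨τ, fun n => ⟨(st n).2, ?_, (key n).2⟩⟩
  rw [(key n).1]
  exact (st n).2.2

theorem eq_of_forall_ge_mem_fPathSet (hδ : 0 < δ) (hnonneg : ∀ j, 0 ≤ h j) {i : Fin N}
    (ω : ℕ → G.Edge) {n₀ : ℕ} {x y : ℝ}
    (hx : ∀ n ≥ n₀, x ∈ G.fPathSet δ h i (prefixList ω n))
    (hy : ∀ n ≥ n₀, y ∈ G.fPathSet δ h i (prefixList ω n)) : x = y := by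
  obtain ⟨q, hq0, hq1, hq⟩ := G.exists_forall_r_le
  obtain ⟨H, hH⟩ := (Set.finite_range h).bddAbove
  have hbound : ∀ n ≥ n₀, |x - y| ≤ H * (q ^ δ) ^ n := by
    intro n hn
    have hxn := hx n hn
    have hyn := hy n hn
    rw [fPathSet_eq_Icc] at hxn hyn
    have hρ : G.pathRatio (prefixList ω n) ^ δ ≤ (q ^ δ) ^ n := by
      rw [Real.rpow_pow_comm hq0]
      exact Real.rpow_le_rpow (G.pathRatio_pos _).le (G.pathRatio_prefixList_le_pow hq ω n) hδ.le
    have hlen : G.pathRatio (prefixList ω n) ^ δ * h (G.pathTgt i (prefixList ω n)) ≤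
        H * (q ^ δ) ^ n := by
      rw [mul_comm H]
      exact mul_le_mul hρ (hH ⟨_, rfl⟩) (hnonneg _) (pow_nonneg (Real.rpow_nonneg hq0 δ) n)
    rw [abs_sub_le_iff]
    constructor <;> linarith [hxn.1, hxn.2, hyn.1, hyn.2]
  have hlim : Tendsto (fun n => H * (q ^ δ) ^ n) atTop (𝓝 0) := by
    simpa using (tendsto_pow_atTop_nhds_zero_of_lt_one (Real.rpow_nonneg hq0 δ)
      (Real.rpow_lt_one hq0 hq1 hδ)).const_mul H
  exact sub_eq_zero.1 (abs_nonpos_iff.1 (ge_of_tendsto hlim (eventually_atTop.2 ⟨n₀, hbound⟩)))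

theorem exists_stopped_prefix {i : Fin N} (hδ : 0 ≤ δ) (hpos : ∀ j, 0 < h j)
    (hsub : ∀ j, h j ≤ G.childMass δ h j) {ε t : ℝ} (hε : 0 < ε)
    (ht : ∀ e j, t ≤ (ε * G.r e) ^ δ * h j) (hti : t ≤ h i) {n₀ : ℕ}
    (hn₀ : ∀ ω : ℕ → G.Edge, G.pathRatio (prefixList ω n₀) ≤ ε) {y : ℝ} (hy : y ∈ Icc 0 (h i)) :
    ∃ σ : G.InfPath i, ∃ n ≤ n₀, y ∈ G.fPathSet δ h i (prefixList σ.1 n) ∧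
      G.pathRatio (prefixList σ.1 n) ≤ ε ∧
      t ≤ G.pathRatio (prefixList σ.1 n) ^ δ * h (G.pathTgt i (prefixList σ.1 n)) := by
  classical
  obtain ⟨σ, hσ⟩ := G.exists_infPath_forall_mem_fPathSet hpos hsub hy
  have hex : ∃ n, G.pathRatio (prefixList σ.1 n) ≤ ε := ⟨n₀, hn₀ _⟩
  refine ⟨σ, Nat.find hex, Nat.find_min' hex (hn₀ _), hσ _, Nat.find_spec hex, ?_⟩
  cases hk : Nat.find hex with
  | zero => simpa [prefixList_zero] using hti
  | succ k =>
    have hεk : ε < G.pathRatio (prefixList σ.1 k) :=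
      lt_of_not_ge (Nat.find_min hex (by omega))
    rw [prefixList_succ, GIFS.pathRatio_append_singleton, GIFS.pathTgt_append_singleton]
    have := (hpos (G.tgt (σ.1 k))).le
    have := (G.r_pos (σ.1 k)).le
    calc t ≤ (ε * G.r (σ.1 k)) ^ δ * h (G.tgt (σ.1 k)) := ht _ _
      _ ≤ _ := by gcongr

end OGIFS

section Psi

variable {X : Type} [MetricSpace X] {N : ℕ} {G : OGIFS X N} {E : Fin N → Set X} {δ : ℝ}
  {h : Fin N → ℝ} {i : Fin N} {π : G.InfPath i → X} {ρ : G.InfPath i → ℝ} {ψ : ℝ → X}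

theorem psi_mem_pathSet (hδ : 0 < δ) (hpos : ∀ j, 0 < h j)
    (hsub : ∀ j, h j ≤ G.childMass δ h j) (hπ : G.IsCoding E i π) (hρ : G.IsFCoding δ h i ρ)
    (hψ : ∀ ω, ψ (ρ ω) = π ω) (σ : G.InfPath i) (n : ℕ) {u : ℝ}
    (hu : u ∈ G.fPathSet δ h i (prefixList σ.1 n)) :
    ψ u ∈ G.pathSet E i (prefixList σ.1 n) := by
  obtain ⟨x, hx, rfl⟩ := hu
  obtain ⟨τ, hτ⟩ := G.exists_infPath_forall_mem_fPathSet hpos hsub hx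
  have hpre := σ.prefixList_splice n τ
  have hρσ : ρ (σ.splice n τ) = G.fPathMap δ h (prefixList σ.1 n) x :=
    G.eq_of_forall_ge_mem_fPathSet hδ (fun j => (hpos j).le) _ (fun m _ => hρ _ m) fun m hm => by
      obtain ⟨k, rfl⟩ := Nat.exists_eq_add_of_le hm
      rw [hpre, OGIFS.fPathSet_append]
      exact mem_image_of_mem _ (hτ k)
  rw [← hρσ, hψ, ← List.append_nil (prefixList σ.1 n), ← prefixList_zero τ.1, ← hpre 0]
  exact hπ _ n

theorem dist_psi_le (hδ : 0 < δ) (hpos : ∀ j, 0 < h j)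
    (hsub : ∀ j, h j ≤ G.childMass δ h j) (hπ : G.IsCoding E i π) (hρ : G.IsFCoding δ h i ρ)
    (hψ : ∀ ω, ψ (ρ ω) = π ω) (hE : ∀ j, Bornology.IsBounded (E j)) (σ : G.InfPath i) (n : ℕ)
    {u w : ℝ} (hu : u ∈ G.fPathSet δ h i (prefixList σ.1 n))
    (hw : w ∈ G.fPathSet δ h i (prefixList σ.1 n)) :
    dist (ψ u) (ψ w) ≤ G.pathRatio (prefixList σ.1 n) * ⨆ j, Metric.diam (E j) :=
  (G.dist_le_of_mem_pathSet hE (psi_mem_pathSet hδ hpos hsub hπ hρ hψ σ n hu)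
    (psi_mem_pathSet hδ hpos hsub hπ hρ hψ σ n hw)).trans <|
    mul_le_mul_of_nonneg_left (le_ciSup (f := fun j => Metric.diam (E j))
      (Set.finite_range _).bddAbove _) (G.pathRatio_pos _).le

theorem dist_psi_le_two_mul (hδ : 0 < δ) (hpos : ∀ j, 0 < h j)
    (hsub : ∀ j, h j ≤ G.childMass δ h j) (hπ : G.IsCoding E i π) (hρ : G.IsFCoding δ h i ρ)
    (hψ : ∀ ω, ψ (ρ ω) = π ω) (hE : ∀ j, Bornology.IsBounded (E j)) {ε : ℝ} (hε : 0 < ε)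
    {x₁ x₂ : ℝ} (hx₁ : x₁ ∈ Icc 0 (h i)) (hx₂ : x₂ ∈ Icc 0 (h i))
    (ht : ∀ e j, |x₁ - x₂| ≤ (ε * G.r e) ^ δ * h j) :
    dist (ψ x₁) (ψ x₂) ≤ 2 * (⨆ j, Metric.diam (E j)) * ε := by
  wlog hle : x₁ ≤ x₂ generalizing x₁ x₂
  · rw [dist_comm]
    exact this hx₂ hx₁ (by simpa only [abs_sub_comm] using ht) (le_of_not_ge hle)
  rw [abs_sub_comm, abs_of_nonneg (sub_nonneg.2 hle)] at ht
  obtain ⟨q, hq0, hq1, hq⟩ := G.exists_forall_r_le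
  obtain ⟨n₀, hn₀⟩ := exists_pow_lt_of_lt_one hε hq1
  set S : Set (List G.Edge) := {γ | ∃ σ : G.InfPath i, ∃ n ≤ n₀, prefixList σ.1 n = γ ∧
    G.pathRatio γ ≤ ε ∧ x₂ - x₁ ≤ G.pathRatio γ ^ δ * h (G.pathTgt i γ)}
  have hcover : ∀ y ∈ Icc x₁ x₂, ∃ γ ∈ S, y ∈ G.fPathSet δ h i γ := fun y hy => by
    obtain ⟨σ, n, hn, hyσ, hσε, hlen⟩ := G.exists_stopped_prefix hδ.le hpos hsub hε ht
      (by linarith [hx₁.1, hx₂.2])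
      (fun ω => (G.pathRatio_prefixList_le_pow hq ω n₀).trans hn₀.le)
      ⟨hx₁.1.trans hy.1, hy.2.trans hx₂.2⟩
    exact ⟨_, ⟨σ, n, hn, rfl, hσε, hlen⟩, hyσ⟩
  simp only [OGIFS.fPathSet_eq_Icc] at hcover
  have hS : S.Finite := (List.finite_length_le G.Edge n₀).subset fun γ ⟨σ, n, hn, hγ, _⟩ => by
    simpa [← hγ] using hn
  obtain ⟨_, ⟨σ, n, -, rfl, hσε, -⟩, _, ⟨σ', n', -, rfl, hσ'ε, -⟩, c, h₁, h₂, h₃, h₄⟩ :=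
    exists_chain_of_finite_cover hS hle hcover fun γ ⟨_, _, _, _, _, hlen⟩ => by linarith
  simp only [← OGIFS.fPathSet_eq_Icc] at h₁ h₂ h₃ h₄
  have hD : 0 ≤ ⨆ j, Metric.diam (E j) := Real.iSup_nonneg fun _ => Metric.diam_nonneg
  calc dist (ψ x₁) (ψ x₂) ≤ dist (ψ x₁) (ψ c) + dist (ψ c) (ψ x₂) := dist_triangle _ _ _
    _ ≤ ε * (⨆ j, Metric.diam (E j)) + ε * ⨆ j, Metric.diam (E j) := by
      gcongr
      · exact (dist_psi_le hδ hpos hsub hπ hρ hψ hE σ _ h₁ h₂).trans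
          (mul_le_mul_of_nonneg_right hσε hD)
      · exact (dist_psi_le hδ hpos hsub hπ hρ hψ hE σ' _ h₃ h₄).trans
          (mul_le_mul_of_nonneg_right hσ'ε hD)
    _ = 2 * (⨆ j, Metric.diam (E j)) * ε := by ring

theorem dist_psi_le_mul_rpow (hδ : 0 < δ) (hpos : ∀ j, 0 < h j)
    (hsub : ∀ j, h j ≤ G.childMass δ h j) (hπ : G.IsCoding E i π) (hρ : G.IsFCoding δ h i ρ)
    (hψ : ∀ ω, ψ (ρ ω) = π ω) (hE : ∀ j, Bornology.IsBounded (E j)) {rmin hmin : ℝ}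
    (hrmin : 0 < rmin) (hr : ∀ e, rmin ≤ G.r e) (hhmin : 0 < hmin) (hh : ∀ j, hmin ≤ h j)
    {x₁ x₂ : ℝ} (hx₁ : x₁ ∈ Icc 0 (h i)) (hx₂ : x₂ ∈ Icc 0 (h i)) :
    dist (ψ x₁) (ψ x₂) ≤
      2 * (⨆ j, Metric.diam (E j)) * rmin⁻¹ * hmin ^ (-(1 / δ)) * |x₁ - x₂| ^ (1 / δ) := by
  rcases eq_or_ne x₁ x₂ with rfl | hne
  · simp [Real.zero_rpow (inv_ne_zero hδ.ne')]
  set ε := (|x₁ - x₂| / hmin) ^ (1 / δ) / rmin with hεdef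
  have hε : 0 < ε := by positivity
  have hscale : ∀ e j, |x₁ - x₂| ≤ (ε * G.r e) ^ δ * h j := fun e j =>
    calc |x₁ - x₂| = (ε * rmin) ^ δ * hmin := by
          rw [div_mul_cancel₀ _ hrmin.ne', ← Real.rpow_mul (by positivity),
            one_div_mul_cancel hδ.ne', Real.rpow_one, div_mul_cancel₀ _ hhmin.ne']
      _ ≤ (ε * G.r e) ^ δ * h j := by
          have := (mul_pos hε hrmin).le
          have := Real.rpow_nonneg (mul_pos hε (G.r_pos e)).le δ
          gcongr
          exacts [hr e, hh j]
  calc dist (ψ x₁) (ψ x₂) ≤ 2 * (⨆ j, Metric.diam (E j)) * ε :=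
        dist_psi_le_two_mul hδ hpos hsub hπ hρ hψ hE hε hx₁ hx₂ hscale
    _ = _ := by
      rw [hεdef, Real.div_rpow (abs_nonneg _) hhmin.le, Real.rpow_neg hhmin.le]
      ring

end Psi

theorem psi_holder_general {d N : ℕ} (G : OGIFS (EuclideanSpace ℝ (Fin d)) N)
    (E : Fin N → Set (EuclideanSpace ℝ (Fin d))) (hE : G.toGIFS.IsInvariant E)
    (δ : ℝ) (hδ : G.toGIFS.IsSimDim δ)
    (hfin : ∀ j, 0 < μH[δ] (E j) ∧ μH[δ] (E j) < ⊤)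
    (h : Fin N → ℝ) (hh : ∀ j, h j = (μH[δ] (E j)).toReal) (i : Fin N)
    (π : G.toGIFS.InfPath i → EuclideanSpace ℝ (Fin d)) (hπ : G.toGIFS.IsCoding E i π)
    (ρ : G.toGIFS.InfPath i → ℝ) (hρ : G.IsFCoding δ h i ρ)
    (ψ : ℝ → EuclideanSpace ℝ (Fin d)) (hψ : ∀ ω : G.toGIFS.InfPath i, ψ (ρ ω) = π ω) :
    ∀ x₁ ∈ Icc (0:ℝ) (h i), ∀ x₂ ∈ Icc (0:ℝ) (h i),
      dist (ψ x₁) (ψ x₂) ≤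
        2 * (⨆ j, Metric.diam (E j)) * (⨅ e : G.Edge, G.r e)⁻¹ *
          (⨅ j, h j) ^ (-(1 / δ)) * |x₁ - x₂| ^ (1 / δ) := by
  intro x₁ hx₁ x₂ hx₂
  obtain ⟨hδ, -⟩ := hδ
  have hpos : ∀ j, 0 < h j := fun j => hh j ▸ ENNReal.toReal_pos (hfin j).1.ne' (hfin j).2.ne
  have hsub : ∀ j, h j ≤ G.childMass δ h j := G.le_childMass_of_subset_biUnion
    (fun j => (hE.2.2 j).le) hδ.le (fun j => (hfin j).2.ne) hh
  obtain ⟨e₀, -⟩ := G.exists_mem_fmap_image hpos (hsub i) (left_mem_Icc.2 (hpos i).le)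
  have : Nonempty G.Edge := ⟨e₀⟩
  have : Nonempty (Fin N) := ⟨i⟩
  obtain ⟨e₁, he₁⟩ := exists_eq_ciInf_of_finite (f := G.r)
  obtain ⟨j₁, hj₁⟩ := exists_eq_ciInf_of_finite (f := h)
  exact dist_psi_le_mul_rpow hδ hpos hsub hπ hρ hψ (fun j => (hE.2.1 j).isBounded)
    (he₁ ▸ G.r_pos e₁) (ciInf_le (Set.finite_range G.r).bddBelow) (hj₁ ▸ hpos j₁)
    (ciInf_le (Set.finite_range h).bddBelow) hx₁ hx₂

/-- The map `ψ_i = π_i ∘ ρ_i⁻¹ : F_i → E_i` is `1/δ`-Hölder continuous: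
`|ψ_i(x₁) − ψ_i(x₂)| ≤ 2 D r_min⁻¹ h^{-1/δ} |x₁ − x₂|^{1/δ}`, where
`D = max_j diam E_j`, `r_min = min_e r_e` and `h = min_j h_j`. -/
theorem psi_holder {d N : ℕ} (G : OGIFS (EuclideanSpace ℝ (Fin d)) N)
    (E : Fin N → Set (EuclideanSpace ℝ (Fin d))) (hE : G.toGIFS.IsInvariant E) (hlin : G.IsLinear E)
    (hosc : G.toGIFS.OSC) (δ : ℝ) (hδ : G.toGIFS.IsSimDim δ)
    (hfin : ∀ j, 0 < μH[δ] (E j) ∧ μH[δ] (E j) < ⊤)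
    (h : Fin N → ℝ) (hh : ∀ j, h j = (μH[δ] (E j)).toReal) (i : Fin N)
    (π : G.toGIFS.InfPath i → EuclideanSpace ℝ (Fin d)) (hπ : G.toGIFS.IsCoding E i π)
    (ρ : G.toGIFS.InfPath i → ℝ) (hρ : G.IsFCoding δ h i ρ)
    (ψ : ℝ → EuclideanSpace ℝ (Fin d)) (hψ : ∀ ω : G.toGIFS.InfPath i, ψ (ρ ω) = π ω) :
    ∀ x₁ ∈ Icc (0:ℝ) (h i), ∀ x₂ ∈ Icc (0:ℝ) (h i),
      dist (ψ x₁) (ψ x₂) ≤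
        2 * (⨆ j, Metric.diam (E j)) * (⨅ e : G.Edge, G.r e)⁻¹ *
          (⨅ j, h j) ^ (-(1 / δ)) * |x₁ - x₂| ^ (1 / δ) :=
  psi_holder_general G E hE δ hδ hfin h hh i π hπ ρ hρ ψ hψ

end
end
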